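/- For any compact metric space (X,d) and continuous map T: X → X, the function Ē(x,y) = limsup_{n→∞} min_{σ∈S_n} (1/n) Σ_{k=0}^{n-1} d(T^k(x), T^{σ(k)}(y)) is a pseudo-metric on X, i.e., it is nonnegative, symmetric, satisfies Ē(x,x)=0 and the triangle inequality. -/

import Mathlib

/-! For every `n`, `Ē_n` is `1/n` times the optimal-matching (earth mover's) distance between the
first `n` points of the two orbits, viewed as multisets; composing two optimal matchings gives
the triangle inequality and inverting one gives symmetry. Since `X` is compact, `Ē_n ≤ diam X`,
and these properties pass to the `limsup` because the `limsup` of a sum of bounded sequences is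
at most the sum of the `limsup`s. -/

open Filter MeasureTheory Topology

/-- `Ē_n(x,y) = min_{σ∈S_n} (1/n) Σ_{k=0}^{n-1} d(T^k x, T^{σ(k)} y)`. -/
noncomputable def EnDist {X : Type*} [MetricSpace X] (T : X → X) (n : ℕ) (x y : X) : ℝ :=
  ⨅ σ : Equiv.Perm (Fin n), (1 / (n : ℝ)) * ∑ k : Fin n, dist (T^[(k : ℕ)] x) (T^[((σ k) : ℕ)] y)

/-- The mean orbital pseudo-metric `Ē(x,y) = limsup_n Ē_n(x,y)`. -/
noncomputable def Ebar {X : Type*} [MetricSpace X] (T : X → X) (x y : X) : ℝ :=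
  Filter.limsup (fun n => EnDist T n x y) Filter.atTop

section MatchingDist

variable {ι α : Type*} [Fintype ι] [PseudoMetricSpace α]

noncomputable def matchingDist (f g : ι → α) : ℝ :=
  ⨅ σ : Equiv.Perm ι, ∑ i, dist (f i) (g (σ i))

variable (f g h : ι → α)

lemma matchingDist_nonneg : 0 ≤ matchingDist f g :=
  Real.iInf_nonneg fun _ => Finset.sum_nonneg fun _ _ => dist_nonneg

lemma matchingDist_le (σ : Equiv.Perm ι) : matchingDist f g ≤ ∑ i, dist (f i) (g (σ i)) :=
  ciInf_le (Finite.bddBelow_range _) σ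

lemma exists_matchingDist_eq : ∃ σ : Equiv.Perm ι, matchingDist f g = ∑ i, dist (f i) (g (σ i)) :=
  let ⟨σ, hσ⟩ := exists_eq_ciInf_of_finite (f := fun σ : Equiv.Perm ι => ∑ i, dist (f i) (g (σ i)))
  ⟨σ, hσ.symm⟩

lemma matchingDist_self : matchingDist f f = 0 :=
  le_antisymm (by simpa using matchingDist_le f f 1) (matchingDist_nonneg f f)

lemma matchingDist_comm : matchingDist f g = matchingDist g f := by
  have key : ∀ f g : ι → α, matchingDist f g ≤ matchingDist g f := fun f g =>
    le_ciInf fun σ => (matchingDist_le f g σ.symm).trans_eq <| by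
      rw [← Equiv.sum_comp σ]
      simp only [Equiv.symm_apply_apply, dist_comm]
  exact le_antisymm (key f g) (key g f)

lemma matchingDist_triangle : matchingDist f h ≤ matchingDist f g + matchingDist g h := by
  obtain ⟨σ, hσ⟩ := exists_matchingDist_eq f g
  obtain ⟨τ, hτ⟩ := exists_matchingDist_eq g h
  calc matchingDist f h ≤ ∑ i, dist (f i) (h (τ (σ i))) := matchingDist_le f h (σ.trans τ)
    _ ≤ ∑ i, (dist (f i) (g (σ i)) + dist (g (σ i)) (h (τ (σ i)))) :=
      Finset.sum_le_sum fun _ _ => dist_triangle _ _ _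
    _ = matchingDist f g + matchingDist g h := by
      rw [Finset.sum_add_distrib, hσ, hτ, Equiv.sum_comp σ (fun j => dist (g j) (h (τ j)))]

end MatchingDist

section EnDist

variable {X : Type*} [MetricSpace X] (T : X → X) (n : ℕ) (x y z : X)

lemma enDist_eq_matchingDist :
    EnDist T n x y = 1 / (n : ℝ) * matchingDist (fun k : Fin n => T^[k] x) (fun k => T^[k] y) :=
  (Real.mul_iInf_of_nonneg (by positivity) _).symm

lemma enDist_nonneg : 0 ≤ EnDist T n x y := by
  rw [enDist_eq_matchingDist]
  exact mul_nonneg (by positivity) (matchingDist_nonneg _ _)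

lemma enDist_self : EnDist T n x x = 0 := by
  rw [enDist_eq_matchingDist, matchingDist_self, mul_zero]

lemma enDist_comm : EnDist T n x y = EnDist T n y x := by
  rw [enDist_eq_matchingDist, enDist_eq_matchingDist, matchingDist_comm]

lemma enDist_triangle : EnDist T n x z ≤ EnDist T n x y + EnDist T n y z := by
  simp only [enDist_eq_matchingDist, ← mul_add]
  exact mul_le_mul_of_nonneg_left (matchingDist_triangle _ _ _) (by positivity)

lemma enDist_le_diam [CompactSpace X] : EnDist T n x y ≤ Metric.diam (Set.univ : Set X) := by
  rcases Nat.eq_zero_or_pos n with rfl | hn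
  · simpa [EnDist] using Metric.diam_nonneg
  have hdist : ∀ k : Fin n, dist (T^[k] x) (T^[k] y) ≤ Metric.diam (Set.univ : Set X) :=
    fun _ => Metric.dist_le_diam_of_mem isCompact_univ.isBounded trivial trivial
  calc EnDist T n x y ≤ 1 / (n : ℝ) * ∑ k : Fin n, dist (T^[k] x) (T^[k] y) := by
        rw [enDist_eq_matchingDist]
        exact mul_le_mul_of_nonneg_left (by simpa using matchingDist_le _ _ 1) (by positivity)
    _ ≤ 1 / (n : ℝ) * (n * Metric.diam (Set.univ : Set X)) := by
        gcongr
        exact (Finset.sum_le_sum fun k (_ : k ∈ Finset.univ) => hdist k).trans_eq (by simp)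
    _ = Metric.diam (Set.univ : Set X) := by field_simp

lemma isBoundedUnder_le_enDist [CompactSpace X] :
    IsBoundedUnder (· ≤ ·) atTop (fun n => EnDist T n x y) :=
  isBoundedUnder_of ⟨_, fun n => enDist_le_diam T n x y⟩

lemma isBoundedUnder_ge_enDist : IsBoundedUnder (· ≥ ·) atTop (fun n => EnDist T n x y) :=
  isBoundedUnder_of ⟨0, fun n => enDist_nonneg T n x y⟩

end EnDist

/-- `Ē` is a pseudo-metric: nonnegative, vanishing on the diagonal,
symmetric and satisfying the triangle inequality. -/
theorem Ebar_is_pseudometric {X : Type*} [MetricSpace X] [CompactSpace X]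
    (T : X → X) :
    (∀ x y : X, 0 ≤ Ebar T x y) ∧
    (∀ x : X, Ebar T x x = 0) ∧
    (∀ x y : X, Ebar T x y = Ebar T y x) ∧
    (∀ x y z : X, Ebar T x z ≤ Ebar T x y + Ebar T y z) := by
  refine ⟨fun x y => ?_, fun x => ?_, fun x y => ?_, fun x y z => ?_⟩
  · exact le_limsup_of_frequently_le (.of_forall fun n => enDist_nonneg T n x y)
      (isBoundedUnder_le_enDist T x y)
  · simp only [Ebar, enDist_self, limsup_const]
  · simp only [Ebar, enDist_comm T _ x y]
  · calc Ebar T x z ≤ limsup (fun n => EnDist T n x y + EnDist T n y z) atTop :=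
          limsup_le_limsup (.of_forall fun n => enDist_triangle T n x y z)
            (isBoundedUnder_ge_enDist T x z).isCoboundedUnder_le
            (isBoundedUnder_le_add (isBoundedUnder_le_enDist T x y)
              (isBoundedUnder_le_enDist T y z))
      _ ≤ Ebar T x y + Ebar T y z :=
          limsup_add_le (isBoundedUnder_ge_enDist T x y) (isBoundedUnder_le_enDist T x y)
            (isBoundedUnder_ge_enDist T y z).isCoboundedUnder_le (isBoundedUnder_le_enDist T y z)
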